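/- Let p(x, y) be a real polynomial of degree at most 3 in x and at most 3 in y (a bicubic polynomial). Suppose that at the two points (0,0) and (0,1), the value p, the partial derivatives ∂p/∂x and ∂p/∂y, and the mixed derivative ∂²p/∂x∂y all vanish. Then p(0, y) = 0 and ∂p/∂x(0, y) = 0 for all y ∈ ℝ. (Hence matching these degrees of freedom at shared edge endpoints makes the piecewise bicubic Bogner–Fox–Schmit functions continuously differentiable across element edges.) -/

import Mathlib

/-- The bicubic polynomial with coefficients `c : Fin 4 → Fin 4 → ℝ`,
`P(x,y) = ∑_{i,j ≤ 3} c i j · xⁱ yʲ`. -/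
noncomputable def bicubic (c : Fin 4 → Fin 4 → ℝ) : ℝ → ℝ → ℝ :=
  fun x y => ∑ i : Fin 4, ∑ j : Fin 4, c i j * x ^ (i : ℕ) * y ^ (j : ℕ)

/-!
On the edge `x = 0` both the trace `P(0, ·)` and the normal derivative `∂ₓP(0, ·)` are cubics
in `y`. The degrees of freedom at `(0,0)` and `(0,1)` are exactly their values and
`y`-derivatives at `y = 0, 1` (for `∂ₓP` the `y`-derivative is the mixed derivative, as partial
derivatives of a polynomial commute), and a cubic with vanishing Hermite data at two points
is zero.
-/

noncomputable def cubic (a : Fin 4 → ℝ) (t : ℝ) : ℝ :=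
  ∑ i : Fin 4, a i * t ^ (i : ℕ)

theorem cubic_apply (a : Fin 4 → ℝ) (t : ℝ) :
    cubic a t = a 0 + a 1 * t + a 2 * t ^ 2 + a 3 * t ^ 3 := by
  simp [cubic, Fin.sum_univ_four]

theorem hasDerivAt_cubic (a : Fin 4 → ℝ) (t : ℝ) :
    HasDerivAt (cubic a) (a 1 + 2 * a 2 * t + 3 * a 3 * t ^ 2) t := by
  have h := HasDerivAt.fun_sum (u := Finset.univ) fun (i : Fin 4) _ =>
    (hasDerivAt_pow (i : ℕ) t).const_mul (a i)
  refine h.congr_deriv ?_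
  simp [Fin.sum_univ_four]
  ring

theorem differentiable_cubic (a : Fin 4 → ℝ) : Differentiable ℝ (cubic a) :=
  fun t => (hasDerivAt_cubic a t).differentiableAt

@[simp]
theorem cubic_zero (a : Fin 4 → ℝ) : cubic a 0 = a 0 := by
  simp [cubic_apply]

@[simp]
theorem deriv_cubic_zero (a : Fin 4 → ℝ) : deriv (cubic a) 0 = a 1 := by
  simp [(hasDerivAt_cubic a 0).deriv]

theorem eq_zero_of_cubic_hermite {a : Fin 4 → ℝ} (h0 : cubic a 0 = 0) (h1 : cubic a 1 = 0)
    (h0' : deriv (cubic a) 0 = 0) (h1' : deriv (cubic a) 1 = 0) : a = 0 := by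
  rw [cubic_apply] at h1
  rw [(hasDerivAt_cubic a 1).deriv] at h1'
  simp only [cubic_zero, deriv_cubic_zero] at h0 h0'
  have h3 : a 3 = 0 := by linarith
  have h2 : a 2 = 0 := by linarith
  ext i
  fin_cases i <;> simp [h0, h0', h2, h3]

theorem bicubic_eq_cubic (c : Fin 4 → Fin 4 → ℝ) (x y : ℝ) :
    bicubic c x y = cubic (fun i => cubic (c i) y) x := by
  simp only [bicubic, cubic, Finset.sum_mul]
  exact Finset.sum_congr rfl fun i _ => Finset.sum_congr rfl fun j _ => by ring

theorem hasDerivAt_bicubic_right (c : Fin 4 → Fin 4 → ℝ) (x b : ℝ) :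
    HasDerivAt (fun y => bicubic c x y) (cubic (fun i => deriv (cubic (c i)) b) x) b := by
  simp only [bicubic_eq_cubic, cubic]
  exact HasDerivAt.fun_sum fun i _ => (differentiable_cubic (c i) b).hasDerivAt.mul_const _

/-- `C¹` continuity across edges for the Bogner–Fox–Schmit element: if a bicubic
polynomial has vanishing value, first partial derivatives and mixed second
derivative at `(0,0)` and `(0,1)`, then `P(0, y) = 0` and `∂P/∂x (0, y) = 0`
for all `y`. -/
theorem bicubic_edge_trace_zero (c : Fin 4 → Fin 4 → ℝ)
    (hval : ∀ b ∈ ({0, 1} : Set ℝ), bicubic c 0 b = 0)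
    (hdx : ∀ b ∈ ({0, 1} : Set ℝ), deriv (fun x => bicubic c x b) 0 = 0)
    (hdy : ∀ b ∈ ({0, 1} : Set ℝ), deriv (fun y => bicubic c 0 y) b = 0)
    (hdxy : ∀ b ∈ ({0, 1} : Set ℝ),
      deriv (fun x => deriv (fun y => bicubic c x y) b) 0 = 0) :
    ∀ y : ℝ, bicubic c 0 y = 0 ∧ deriv (fun x => bicubic c x y) 0 = 0 := by
  have trace (y : ℝ) : bicubic c 0 y = cubic (c 0) y := by
    simp [bicubic_eq_cubic]
  have normal (y : ℝ) : deriv (fun x => bicubic c x y) 0 = cubic (c 1) y := by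
    simp [bicubic_eq_cubic]
  have mixed (b : ℝ) :
      deriv (fun x => deriv (fun y => bicubic c x y) b) 0 = deriv (cubic (c 1)) b := by
    simp [fun x => (hasDerivAt_bicubic_right c x b).deriv]
  simp only [Set.mem_insert_iff, Set.mem_singleton_iff, forall_eq_or_imp, forall_eq,
    trace, normal, mixed] at hval hdx hdy hdxy
  have trace_coeff := eq_zero_of_cubic_hermite hval.1 hval.2 hdy.1 hdy.2
  have normal_coeff := eq_zero_of_cubic_hermite hdx.1 hdx.2 hdxy.1 hdxy.2
  simp [trace, normal, trace_coeff, normal_coeff, cubic]
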